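/- arXiv:1203.2980 — 7 statements merged into one kernel-verified Lean document; each statement's English description precedes it below -/
import Mathlib

section
/- Let α ≥ 1 + √(1 + π²/4) and define Φ(r,z) = (4α²r² − (8α + π²)) e^{-α r²} sin(π z). Then for all r ≥ 1 and all z ∈ [0,1], one has 0 ≤ Φ(r,z) ≤ 4α² e^{-α}. -/
/-!
The threshold on `α` is exactly the condition `8α + π² ≤ 4α²`, so the polynomial factor is
nonnegative for `r ≥ 1`, as is `sin (π z)` on `[0, 1]`. For the upper bound drop the negative
term and `sin (π z) ≤ 1`; it remains to see that `t e^{-α t}` (with `t = r²`) is maximal at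
`t = 1` on `[1, ∞)`, which follows from `1 + x ≤ eˣ` at `x = α (t - 1)`.
-/

open Real

lemma eight_mul_add_pi_sq_le_four_mul_sq {α : ℝ} (hα : 1 + √(1 + π ^ 2 / 4) ≤ α) :
    8 * α + π ^ 2 ≤ 4 * α ^ 2 := by
  have hsq : √(1 + π ^ 2 / 4) ^ 2 = 1 + π ^ 2 / 4 := sq_sqrt (by positivity)
  nlinarith [sqrt_nonneg (1 + π ^ 2 / 4)]

lemma mul_exp_neg_mul_le_exp_neg {α t : ℝ} (hα : 1 ≤ α) (ht : 1 ≤ t) :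
    t * exp (-α * t) ≤ exp (-α) := by
  have h : t ≤ exp (α * (t - 1)) := by
    nlinarith [add_one_le_exp (α * (t - 1))]
  calc t * exp (-α * t) ≤ exp (α * (t - 1)) * exp (-α * t) := by gcongr
    _ = exp (-α) := by rw [← exp_add]; ring_nf

lemma sin_pi_mul_mem_Icc {z : ℝ} (hz : z ∈ Set.Icc (0 : ℝ) 1) :
    sin (π * z) ∈ Set.Icc (0 : ℝ) 1 :=
  ⟨sin_nonneg_of_nonneg_of_le_pi (by nlinarith [pi_pos, hz.1])
    (by nlinarith [pi_pos, hz.2]), sin_le_one _⟩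

/-- For `α ≥ 1 + √(1 + π²/4)` and
`Φ(r,z) = (4α²r² − (8α + π²)) e^{-α r²} sin(π z)`, for all `r ≥ 1` and `z ∈ [0,1]`,
`0 ≤ Φ(r,z) ≤ 4α² e^{-α}`. -/
theorem stmt_1 (α : ℝ) (hα : 1 + Real.sqrt (1 + π ^ 2 / 4) ≤ α)
    (r z : ℝ) (hr : 1 ≤ r) (hz : z ∈ Set.Icc (0 : ℝ) 1) :
    0 ≤ (4 * α ^ 2 * r ^ 2 - (8 * α + π ^ 2)) * Real.exp (-α * r ^ 2) * Real.sin (π * z)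
    ∧ (4 * α ^ 2 * r ^ 2 - (8 * α + π ^ 2)) * Real.exp (-α * r ^ 2) * Real.sin (π * z)
        ≤ 4 * α ^ 2 * Real.exp (-α) := by
  have hcoef := eight_mul_add_pi_sq_le_four_mul_sq hα
  have hα1 : 1 ≤ α := le_trans (le_add_of_nonneg_right (sqrt_nonneg _)) hα
  have hr2 : 1 ≤ r ^ 2 := one_le_pow₀ hr
  obtain ⟨hs0, hs1⟩ := sin_pi_mul_mem_Icc hz
  have hpoly : 0 ≤ 4 * α ^ 2 * r ^ 2 - (8 * α + π ^ 2) := by nlinarith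
  refine ⟨by positivity, ?_⟩
  calc (4 * α ^ 2 * r ^ 2 - (8 * α + π ^ 2)) * exp (-α * r ^ 2) * sin (π * z)
      ≤ 4 * α ^ 2 * r ^ 2 * exp (-α * r ^ 2) * 1 := by
        gcongr
        linarith [sq_nonneg π]
    _ = 4 * α ^ 2 * (r ^ 2 * exp (-α * r ^ 2)) := by ring
    _ ≤ 4 * α ^ 2 * exp (-α) := by gcongr; exact mul_exp_neg_mul_le_exp_neg hα1 hr2
end

section
/- Let α ≥ 1 + √(1 + π²/4), let φ(r,z) = e^{-α r²} sin(π z), let Φ(r,z) = (4α²r² − (8α + π²)) φ(r,z), and let c₀ = (3/(2π²)) ∫₀¹ ∫₁^∞ (4α²r² − (8α + π²))² φ(r,z) r³ dr dz. Let u : (1,∞) × (0,1) → ℝ be measurable with u(r,z) ≠ 0 almost everywhere, such that (r,z) ↦ u(r,z)² φ(r,z) r³ and (r,z) ↦ log(u(r,z)²) Φ(r,z) r³ are both integrable on (1,∞) × (0,1). If ∫₀¹ ∫₁^∞ log(u²) Φ r³ dr dz ≥ 0, then (∫₀¹ ∫₁^∞ log(u²) Φ r³ dr dz)² ≤ (8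 c₀ π²/3) ∫₀¹ ∫₁^∞ u² φ r³ dr dz. -/
/-!
Write `G = 4α²r² − (8α + π²)` and `w = φ r³`. The hypothesis on `α` says `(α − 1)² ≥ 1 + π²/4`,
i.e. `G ≥ 0` for `r ≥ 1`, and `w ≥ 0` on the domain. Since `log (u²) ≤ 2|u|`, AM–GM gives
pointwise `ε log (u²) G w ≤ ε² u² w + G² w` for every `ε ≥ 0`. Integrating, the quadratic
`ε ↦ ε² ∫u²w − ε ∫log (u²) G w + ∫G²w` is nonnegative (for `ε < 0` because the middle integral
is `≥ 0`), so its discriminant is `≤ 0`; and `8 c₀ π² / 3 = 4 ∫G²w`.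
-/

open Real MeasureTheory Polynomial Set

lemma Real.log_sq_le_two_mul_abs (x : ℝ) : log (x ^ 2) ≤ 2 * |x| := by
  rw [log_pow, ← log_abs]
  push_cast
  linarith [log_le_self (abs_nonneg x)]

lemma mul_log_sq_mul_le {ε x G w : ℝ} (hε : 0 ≤ ε) (hG : 0 ≤ G) (hw : 0 ≤ w) :
    ε * (log (x ^ 2) * (G * w)) ≤ ε ^ 2 * (x ^ 2 * w) + G ^ 2 * w :=
  calc ε * (log (x ^ 2) * (G * w)) ≤ ε * (2 * |x| * (G * w)) := by
        gcongr
        exact log_sq_le_two_mul_abs x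
    _ = 2 * (ε * |x|) * G * w := by ring
    _ ≤ ((ε * |x|) ^ 2 + G ^ 2) * w := by gcongr; exact two_mul_le_add_sq _ _
    _ = ε ^ 2 * (x ^ 2 * w) + G ^ 2 * w := by rw [mul_pow, sq_abs]; ring

lemma sq_le_four_mul_mul_of_forall_pos {I A B : ℝ} (hI : 0 ≤ I) (hA : 0 ≤ A) (hB : 0 ≤ B)
    (h : ∀ ε, 0 < ε → ε * I ≤ ε ^ 2 * B + A) : I ^ 2 ≤ 4 * A * B := by
  have hquad : ∀ x : ℝ, 0 ≤ B * (x * x) + -I * x + A := by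
    intro x
    rcases le_or_gt x 0 with hx | hx
    · nlinarith [mul_nonneg hB (mul_self_nonneg x)]
    · nlinarith [h x hx]
  have hdisc := discrim_le_zero hquad
  rw [discrim] at hdisc
  linarith

theorem sq_integral_log_sq_mul_le {X : Type*} [MeasurableSpace X] {μ : Measure X}
    {u G w : X → ℝ} (hG : ∀ᵐ x ∂μ, 0 ≤ G x) (hw : ∀ᵐ x ∂μ, 0 ≤ w x)
    (hu : Integrable (fun x ↦ u x ^ 2 * w x) μ)
    (hlog : Integrable (fun x ↦ log (u x ^ 2) * (G x * w x)) μ)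
    (hGw : Integrable (fun x ↦ G x ^ 2 * w x) μ)
    (hI : 0 ≤ ∫ x, log (u x ^ 2) * (G x * w x) ∂μ) :
    (∫ x, log (u x ^ 2) * (G x * w x) ∂μ) ^ 2
      ≤ 4 * (∫ x, G x ^ 2 * w x ∂μ) * ∫ x, u x ^ 2 * w x ∂μ := by
  refine sq_le_four_mul_mul_of_forall_pos hI ?_ ?_ fun ε hε ↦ ?_
  · exact integral_nonneg_of_ae (by filter_upwards [hw] with x hx using by positivity)
  · exact integral_nonneg_of_ae (by filter_upwards [hw] with x hx using by positivity)
  calc ε * ∫ x, log (u x ^ 2) * (G x * w x) ∂μ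
      = ∫ x, ε * (log (u x ^ 2) * (G x * w x)) ∂μ := (integral_const_mul ε _).symm
    _ ≤ ∫ x, ε ^ 2 * (u x ^ 2 * w x) + G x ^ 2 * w x ∂μ := by
      refine integral_mono_ae (hlog.const_mul ε) ((hu.const_mul _).add hGw) ?_
      filter_upwards [hG, hw] with x hGx hwx using mul_log_sq_mul_le hε.le hGx hwx
    _ = ε ^ 2 * (∫ x, u x ^ 2 * w x ∂μ) + ∫ x, G x ^ 2 * w x ∂μ := by
      rw [integral_add (hu.const_mul _) hGw, integral_const_mul]

lemma integrable_eval_mul_exp_neg_mul_sq {b : ℝ} (hb : 0 < b) (p : ℝ[X]) :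
    Integrable fun x ↦ p.eval x * exp (-b * x ^ 2) := by
  induction p using Polynomial.induction_on' with
  | add p q hp hq => simp only [eval_add, add_mul]; exact hp.add hq
  | monomial n a =>
    have hn : (-1 : ℝ) < n := by linarith [n.cast_nonneg (α := ℝ)]
    have h := (integrable_rpow_mul_exp_neg_mul_sq hb hn).const_mul a
    simpa only [eval_monomial, rpow_natCast, mul_assoc] using h

lemma integrableOn_prod_mul {s t : Set ℝ} {f g : ℝ → ℝ} (hf : IntegrableOn f s)
    (hg : IntegrableOn g t) : IntegrableOn (fun p : ℝ × ℝ ↦ f p.1 * g p.2) (s ×ˢ t) := by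
  rw [IntegrableOn, Measure.volume_eq_prod, ← Measure.prod_restrict]
  exact Integrable.mul_prod hf hg

lemma sub_nonneg_of_one_add_sqrt_le {α r : ℝ} (hα : 1 + √(1 + π ^ 2 / 4) ≤ α) (hr : 1 ≤ r) :
    0 ≤ 4 * α ^ 2 * r ^ 2 - (8 * α + π ^ 2) := by
  have hsq : √(1 + π ^ 2 / 4) ^ 2 = 1 + π ^ 2 / 4 := sq_sqrt (by positivity)
  have hs := sqrt_nonneg (1 + π ^ 2 / 4)
  nlinarith [sq_nonneg (r - 1), sq_nonneg (α - 1 - √(1 + π ^ 2 / 4))]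

theorem stmt_4_general (α : ℝ) (hα : 1 + Real.sqrt (1 + π ^ 2 / 4) ≤ α)
    (u : ℝ × ℝ → ℝ)
    (hint1 : IntegrableOn
      (fun p : ℝ × ℝ => u p ^ 2 * (Real.exp (-α * p.1 ^ 2) * Real.sin (π * p.2)) * p.1 ^ 3)
      (Set.Ioi (1 : ℝ) ×ˢ Set.Ioo (0 : ℝ) 1) volume)
    (hint2 : IntegrableOn
      (fun p : ℝ × ℝ => Real.log (u p ^ 2) *
        ((4 * α ^ 2 * p.1 ^ 2 - (8 * α + π ^ 2)) * (Real.exp (-α * p.1 ^ 2) * Real.sin (π * p.2)))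
        * p.1 ^ 3)
      (Set.Ioi (1 : ℝ) ×ˢ Set.Ioo (0 : ℝ) 1) volume)
    (hpos : 0 ≤ ∫ p in Set.Ioi (1 : ℝ) ×ˢ Set.Ioo (0 : ℝ) 1,
      Real.log (u p ^ 2) *
        ((4 * α ^ 2 * p.1 ^ 2 - (8 * α + π ^ 2)) * (Real.exp (-α * p.1 ^ 2) * Real.sin (π * p.2)))
        * p.1 ^ 3) :
    (∫ p in Set.Ioi (1 : ℝ) ×ˢ Set.Ioo (0 : ℝ) 1,
      Real.log (u p ^ 2) *
        ((4 * α ^ 2 * p.1 ^ 2 - (8 * α + π ^ 2)) * (Real.exp (-α * p.1 ^ 2) * Real.sin (π * p.2)))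
        * p.1 ^ 3) ^ 2
    ≤ (8 * ((3 / (2 * π ^ 2)) *
          ∫ p in Set.Ioi (1 : ℝ) ×ˢ Set.Ioo (0 : ℝ) 1,
            (4 * α ^ 2 * p.1 ^ 2 - (8 * α + π ^ 2)) ^ 2
              * (Real.exp (-α * p.1 ^ 2) * Real.sin (π * p.2)) * p.1 ^ 3) * π ^ 2 / 3)
        * ∫ p in Set.Ioi (1 : ℝ) ×ˢ Set.Ioo (0 : ℝ) 1,
            u p ^ 2 * (Real.exp (-α * p.1 ^ 2) * Real.sin (π * p.2)) * p.1 ^ 3 := by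
  have hα₀ : 0 < α := by linarith [sqrt_nonneg (1 + π ^ 2 / 4)]
  have hS : MeasurableSet (Ioi (1 : ℝ) ×ˢ Ioo (0 : ℝ) 1) :=
    measurableSet_Ioi.prod measurableSet_Ioo
  have hG : ∀ᵐ p ∂volume.restrict (Ioi (1 : ℝ) ×ˢ Ioo (0 : ℝ) 1),
      0 ≤ 4 * α ^ 2 * p.1 ^ 2 - (8 * α + π ^ 2) := by
    filter_upwards [ae_restrict_mem hS] with p hp
    exact sub_nonneg_of_one_add_sqrt_le hα hp.1.le
  have hw : ∀ᵐ p ∂volume.restrict (Ioi (1 : ℝ) ×ˢ Ioo (0 : ℝ) 1),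
      0 ≤ exp (-α * p.1 ^ 2) * (sin (π * p.2) * p.1 ^ 3) := by
    filter_upwards [ae_restrict_mem hS] with ⟨r, z⟩ ⟨hr, hz₀, hz₁⟩
    have hsin : 0 ≤ sin (π * z) := sin_nonneg_of_nonneg_of_le_pi (by positivity)
      (mul_le_of_le_one_right pi_pos.le hz₁.le)
    have hr₀ : (0 : ℝ) < r := by linarith [mem_Ioi.1 hr]
    positivity
  have hGw : IntegrableOn (fun p : ℝ × ℝ ↦ (4 * α ^ 2 * p.1 ^ 2 - (8 * α + π ^ 2)) ^ 2
      * (exp (-α * p.1 ^ 2) * sin (π * p.2)) * p.1 ^ 3) (Ioi (1 : ℝ) ×ˢ Ioo (0 : ℝ) 1) := by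
    have hr := integrable_eval_mul_exp_neg_mul_sq hα₀
      ((C (4 * α ^ 2) * X ^ 2 - C (8 * α + π ^ 2)) ^ 2 * X ^ 3)
    have hz : IntegrableOn (fun z ↦ sin (π * z)) (Ioo (0 : ℝ) 1) :=
      (continuous_sin.comp (continuous_const.mul continuous_id)).integrableOn_Icc.mono_set
        Ioo_subset_Icc_self
    refine (integrableOn_prod_mul hr.integrableOn hz).congr_fun (fun p _ ↦ ?_) hS
    simp only [eval_mul, eval_pow, eval_sub, eval_C, eval_X]
    ring
  have hc : ∀ A B : ℝ, 8 * (3 / (2 * π ^ 2) * A) * π ^ 2 / 3 * B = 4 * A * B := fun A B ↦ by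
    field_simp
    ring
  rw [hc]
  simpa only [mul_assoc] using sq_integral_log_sq_mul_le hG hw (u := u)
    (by simpa only [mul_assoc, IntegrableOn] using hint1)
    (by simpa only [mul_assoc, IntegrableOn] using hint2)
    (by simpa only [mul_assoc, IntegrableOn] using hGw) (by simpa only [mul_assoc] using hpos)

/-- With `φ(r,z) = e^{-αr²} sin(πz)`, `Φ(r,z) = (4α²r² − (8α+π²)) φ(r,z)`,
`α ≥ 1 + √(1+π²/4)` and `c₀ = (3/(2π²)) ∫∫ (4α²r² − (8α+π²))² φ r³ dr dz`, if
`u` is measurable and a.e. nonzero on `(1,∞) × (0,1)`, with `u² φ r³` and `log(u²) Φ r³`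
integrable there, and `∫∫ log(u²) Φ r³ ≥ 0`, then
`(∫∫ log(u²) Φ r³)² ≤ (8 c₀ π²/3) ∫∫ u² φ r³`. -/
theorem stmt_4 (α : ℝ) (hα : 1 + Real.sqrt (1 + π ^ 2 / 4) ≤ α)
    (u : ℝ × ℝ → ℝ) (hu : Measurable u)
    (hne : ∀ᵐ p ∂(volume.restrict (Set.Ioi (1 : ℝ) ×ˢ Set.Ioo (0 : ℝ) 1)), u p ≠ 0)
    (hint1 : IntegrableOn
      (fun p : ℝ × ℝ => u p ^ 2 * (Real.exp (-α * p.1 ^ 2) * Real.sin (π * p.2)) * p.1 ^ 3)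
      (Set.Ioi (1 : ℝ) ×ˢ Set.Ioo (0 : ℝ) 1) volume)
    (hint2 : IntegrableOn
      (fun p : ℝ × ℝ => Real.log (u p ^ 2) *
        ((4 * α ^ 2 * p.1 ^ 2 - (8 * α + π ^ 2)) * (Real.exp (-α * p.1 ^ 2) * Real.sin (π * p.2)))
        * p.1 ^ 3)
      (Set.Ioi (1 : ℝ) ×ˢ Set.Ioo (0 : ℝ) 1) volume)
    (hpos : 0 ≤ ∫ p in Set.Ioi (1 : ℝ) ×ˢ Set.Ioo (0 : ℝ) 1,
      Real.log (u p ^ 2) *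
        ((4 * α ^ 2 * p.1 ^ 2 - (8 * α + π ^ 2)) * (Real.exp (-α * p.1 ^ 2) * Real.sin (π * p.2)))
        * p.1 ^ 3) :
    (∫ p in Set.Ioi (1 : ℝ) ×ˢ Set.Ioo (0 : ℝ) 1,
      Real.log (u p ^ 2) *
        ((4 * α ^ 2 * p.1 ^ 2 - (8 * α + π ^ 2)) * (Real.exp (-α * p.1 ^ 2) * Real.sin (π * p.2)))
        * p.1 ^ 3) ^ 2
    ≤ (8 * ((3 / (2 * π ^ 2)) *
          ∫ p in Set.Ioi (1 : ℝ) ×ˢ Set.Ioo (0 : ℝ) 1,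
            (4 * α ^ 2 * p.1 ^ 2 - (8 * α + π ^ 2)) ^ 2
              * (Real.exp (-α * p.1 ^ 2) * Real.sin (π * p.2)) * p.1 ^ 3) * π ^ 2 / 3)
        * ∫ p in Set.Ioi (1 : ℝ) ×ˢ Set.Ioo (0 : ℝ) 1,
            u p ^ 2 * (Real.exp (-α * p.1 ^ 2) * Real.sin (π * p.2)) * p.1 ^ 3 :=
  stmt_4_general α hα u hint1 hint2 hpos
end

section
/- Let c₀ > 0, T ∈ (0,∞], and let Y : [0,T) → ℝ be twice differentiable with Y''(t) ≥ (3/(2c₀)) Y(t)² for all t ∈ [0,T) and Y'(0) > 0. Then Y'(t) > 0 for all t ∈ [0,T), and moreover Y'(t)² ≥ Y'(0)² − Y(0)³/c₀ + Y(t)³/c₀ for all t ∈ [0,T). -/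
/-! Since `Y'' ≥ (3/(2c₀)) Y² ≥ 0`, `Y'` is nondecreasing, hence `Y' ≥ Y'(0) > 0`. The energy
`E = Y'² − Y³/c₀` then has `E' = 2Y' (Y'' − (3/(2c₀)) Y²) ≥ 0`, so `E(t) ≥ E(0)`. -/

lemma monotoneOn_of_hasDerivWithinAt_nonneg_of_convex {D : Set ℝ} (hD : Convex ℝ D)
    {f f' : ℝ → ℝ} (hf : ∀ x ∈ D, HasDerivWithinAt f (f' x) D x) (hf' : ∀ x ∈ D, 0 ≤ f' x) :
    MonotoneOn f D :=
  monotoneOn_of_hasDerivWithinAt_nonneg hD (fun x hx => (hf x hx).continuousWithinAt)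
    (fun x hx => (hf x (interior_subset hx)).mono interior_subset)
    (fun x hx => hf' x (interior_subset hx))

lemma convex_Ici_inter_coe_lt (T : EReal) : Convex ℝ {s : ℝ | 0 ≤ s ∧ (s : EReal) < T} := by
  have hlower : IsLowerSet {s : ℝ | (s : EReal) < T} := fun _ _ hba ha =>
    (EReal.coe_le_coe_iff.2 hba).trans_lt ha
  exact (convex_Ici 0).inter hlower.ordConnected.convex

lemma monotoneOn_energy {D : Set ℝ} (hD : Convex ℝ D) {c : ℝ} {Y Y' Y'' : ℝ → ℝ}
    (hd1 : ∀ x ∈ D, HasDerivWithinAt Y (Y' x) D x)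
    (hd2 : ∀ x ∈ D, HasDerivWithinAt Y' (Y'' x) D x)
    (hineq : ∀ x ∈ D, 3 / (2 * c) * Y x ^ 2 ≤ Y'' x) (hpos : ∀ x ∈ D, 0 ≤ Y' x) :
    MonotoneOn (fun x => Y' x ^ 2 - Y x ^ 3 / c) D := by
  refine monotoneOn_of_hasDerivWithinAt_nonneg_of_convex hD
    (f' := fun x => 2 * Y' x * (Y'' x - 3 / (2 * c) * Y x ^ 2)) (fun x hx => ?_)
    (fun x hx => mul_nonneg (mul_nonneg zero_le_two (hpos x hx)) (sub_nonneg.2 (hineq x hx)))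
  refine (((hd2 x hx).fun_pow 2).fun_sub (((hd1 x hx).fun_pow 3).div_const c)).congr_deriv ?_
  push_cast
  ring

theorem stmt_8_general (c₀ : ℝ) (hc₀ : 0 < c₀) (T : EReal)
    (Y Y' Y'' : ℝ → ℝ)
    (hd1 : ∀ t : ℝ, 0 ≤ t → (t : EReal) < T →
      HasDerivWithinAt Y (Y' t) {s : ℝ | 0 ≤ s ∧ (s : EReal) < T} t)
    (hd2 : ∀ t : ℝ, 0 ≤ t → (t : EReal) < T →
      HasDerivWithinAt Y' (Y'' t) {s : ℝ | 0 ≤ s ∧ (s : EReal) < T} t)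
    (hineq : ∀ t : ℝ, 0 ≤ t → (t : EReal) < T → 3 / (2 * c₀) * Y t ^ 2 ≤ Y'' t)
    (h0 : 0 < Y' 0) :
    ∀ t : ℝ, 0 ≤ t → (t : EReal) < T →
      0 < Y' t ∧ Y' 0 ^ 2 - Y 0 ^ 3 / c₀ + Y t ^ 3 / c₀ ≤ Y' t ^ 2 := by
  intro t ht htT
  set D := {s : ℝ | 0 ≤ s ∧ (s : EReal) < T}
  have hD : Convex ℝ D := convex_Ici_inter_coe_lt T
  have h0D : (0 : ℝ) ∈ D := ⟨le_rfl, (EReal.coe_le_coe_iff.2 ht).trans_lt htT⟩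
  have htD : t ∈ D := ⟨ht, htT⟩
  have hmonoY' : MonotoneOn Y' D :=
    monotoneOn_of_hasDerivWithinAt_nonneg_of_convex hD (fun x hx => hd2 x hx.1 hx.2)
      (fun x hx => (by positivity : 0 ≤ 3 / (2 * c₀) * Y x ^ 2).trans (hineq x hx.1 hx.2))
  have hposY' : ∀ x ∈ D, 0 < Y' x := fun x hx => h0.trans_le (hmonoY' h0D hx hx.1)
  have henergy := monotoneOn_energy hD (fun x hx => hd1 x hx.1 hx.2)
    (fun x hx => hd2 x hx.1 hx.2) (fun x hx => hineq x hx.1 hx.2)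
    (fun x hx => (hposY' x hx).le) h0D htD ht
  exact ⟨hposY' t htD, by linarith [henergy]⟩

/-- If `Y : [0,T) → ℝ` (`T ∈ (0,∞]`) is twice differentiable with
`Y'' ≥ (3/(2c₀)) Y²` and `Y'(0) > 0`, then `Y' > 0` on `[0,T)` and
`Y'(t)² ≥ Y'(0)² − Y(0)³/c₀ + Y(t)³/c₀`. -/
theorem stmt_8 (c₀ : ℝ) (hc₀ : 0 < c₀) (T : EReal) (hT : 0 < T)
    (Y Y' Y'' : ℝ → ℝ)
    (hd1 : ∀ t : ℝ, 0 ≤ t → (t : EReal) < T →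
      HasDerivWithinAt Y (Y' t) {s : ℝ | 0 ≤ s ∧ (s : EReal) < T} t)
    (hd2 : ∀ t : ℝ, 0 ≤ t → (t : EReal) < T →
      HasDerivWithinAt Y' (Y'' t) {s : ℝ | 0 ≤ s ∧ (s : EReal) < T} t)
    (hineq : ∀ t : ℝ, 0 ≤ t → (t : EReal) < T → 3 / (2 * c₀) * Y t ^ 2 ≤ Y'' t)
    (h0 : 0 < Y' 0) :
    ∀ t : ℝ, 0 ≤ t → (t : EReal) < T →
      0 < Y' t ∧ Y' 0 ^ 2 - Y 0 ^ 3 / c₀ + Y t ^ 3 / c₀ ≤ Y' t ^ 2 :=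
  stmt_8_general c₀ hc₀ T Y Y' Y'' hd1 hd2 hineq h0
end

section
/- Let c₀ > 0, T ∈ (0,∞], and let Y : [0,T) → ℝ be differentiable with Y(0) > 0, Y'(t) > 0 for all t ∈ [0,T), and Y'(t)² ≥ Y(t)³/c₀ for all t ∈ [0,T). Then Y(t) > 0 for all t ∈ [0,T), and for every t ∈ [0,T) with t < 2√c₀/√(Y(0)), one has Y(t) ≥ 4 c₀ Y(0) / (2√c₀ − t √(Y(0)))². -/
/-!
Since `Y' > 0`, `Y` increases and stays positive. The inequality `Y'² ≥ Y³/c₀` then reads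
`Y' ≥ Y^{3/2}/√c₀`, which says exactly that `1/√Y + t/(2√c₀)` is nonincreasing; comparing its
values at `t` and `0` and solving for `Y t` gives the blow-up lower bound.
-/

open Set

section Interval

variable {f f' : ℝ → ℝ} {a b : ℝ}

theorem continuousOn_Icc_of_hasDerivWithinAt
    (hf : ∀ x ∈ Icc a b, HasDerivWithinAt f (f' x) (Icc a b) x) : ContinuousOn f (Icc a b) :=
  fun x hx => (hf x hx).continuousWithinAt

theorem hasDerivWithinAt_Ioo_of_Icc
    (hf : ∀ x ∈ Icc a b, HasDerivWithinAt f (f' x) (Icc a b) x) :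
    ∀ x ∈ Ioo a b, HasDerivWithinAt f (f' x) (Ioo a b) x :=
  fun x hx => (hf x (Ioo_subset_Icc_self hx)).mono Ioo_subset_Icc_self

theorem monotoneOn_Icc_of_hasDerivWithinAt_nonneg
    (hf : ∀ x ∈ Icc a b, HasDerivWithinAt f (f' x) (Icc a b) x) (hf' : ∀ x ∈ Ioo a b, 0 ≤ f' x) :
    MonotoneOn f (Icc a b) :=
  monotoneOn_of_hasDerivWithinAt_nonneg (convex_Icc a b) (continuousOn_Icc_of_hasDerivWithinAt hf)
    (by simpa only [interior_Icc] using hasDerivWithinAt_Ioo_of_Icc hf)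
    (by simpa only [interior_Icc] using hf')

theorem antitoneOn_Icc_of_hasDerivWithinAt_nonpos
    (hf : ∀ x ∈ Icc a b, HasDerivWithinAt f (f' x) (Icc a b) x) (hf' : ∀ x ∈ Ioo a b, f' x ≤ 0) :
    AntitoneOn f (Icc a b) :=
  antitoneOn_of_hasDerivWithinAt_nonpos (convex_Icc a b) (continuousOn_Icc_of_hasDerivWithinAt hf)
    (by simpa only [interior_Icc] using hasDerivWithinAt_Ioo_of_Icc hf)
    (by simpa only [interior_Icc] using hf')

end Interval

theorem mul_sqrt_le_sqrt_mul_of_pow_three_le_mul_sq {c y y' : ℝ} (hc : 0 ≤ c) (hy : 0 ≤ y)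
    (hy' : 0 ≤ y') (h : y ^ 3 ≤ c * y' ^ 2) : y * √y ≤ √c * y' := by
  refine (pow_le_pow_iff_left₀ (by positivity) (by positivity) two_ne_zero).1 ?_
  calc (y * √y) ^ 2 = y ^ 3 := by rw [mul_pow, Real.sq_sqrt hy]; ring
    _ ≤ c * y' ^ 2 := h
    _ = (√c * y') ^ 2 := by rw [mul_pow, Real.sq_sqrt hc]

theorem antitoneOn_inv_sqrt_add_div {y y' : ℝ → ℝ} {a b c : ℝ} (hc : 0 < c)
    (hy : ∀ x ∈ Icc a b, HasDerivWithinAt y (y' x) (Icc a b) x)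
    (hpos : ∀ x ∈ Icc a b, 0 < y x) (hy' : ∀ x ∈ Ioo a b, 0 ≤ y' x)
    (hineq : ∀ x ∈ Ioo a b, y x ^ 3 ≤ c * y' x ^ 2) :
    AntitoneOn (fun s => (√(y s))⁻¹ + s / (2 * √c)) (Icc a b) := by
  refine antitoneOn_Icc_of_hasDerivWithinAt_nonpos
    (fun x hx => (((hy x hx).sqrt (hpos x hx).ne').inv (Real.sqrt_pos.2 (hpos x hx)).ne').add
      ((hasDerivWithinAt_id x _).div_const _)) fun x hx => ?_
  have hyx := hpos x (Ioo_subset_Icc_self hx)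
  have hsqrt : 0 < √(y x) := Real.sqrt_pos.2 hyx
  have key := mul_sqrt_le_sqrt_mul_of_pow_three_le_mul_sq hc.le hyx.le (hy' x hx) (hineq x hx)
  have : 1 / (2 * √c) ≤ y' x / (2 * √(y x)) / √(y x) ^ 2 := by
    rw [Real.sq_sqrt hyx.le, div_div, div_le_div_iff₀ (by positivity) (by positivity)]
    nlinarith
  simp only [neg_div]
  linarith

theorem four_mul_div_sq_le_of_inv_sqrt_add_le {c y₀ y t : ℝ} (hc : 0 < c) (hy₀ : 0 < y₀)
    (hy : 0 < y) (ht : t < 2 * √c / √y₀) (h : (√y)⁻¹ + t / (2 * √c) ≤ (√y₀)⁻¹) :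
    4 * c * y₀ / (2 * √c - t * √y₀) ^ 2 ≤ y := by
  have ha : 0 < √c := Real.sqrt_pos.2 hc
  have hb : 0 < √y₀ := Real.sqrt_pos.2 hy₀
  have hs : 0 < √y := Real.sqrt_pos.2 hy
  have hd : 0 < 2 * √c - t * √y₀ := by linarith [(lt_div_iff₀ hb).1 ht]
  have hinv : (√y)⁻¹ ≤ (2 * √c - t * √y₀) / (2 * √c * √y₀) := by
    calc (√y)⁻¹ ≤ (√y₀)⁻¹ - t / (2 * √c) := by linarith
      _ = _ := by field_simp
  have hlin : 2 * √c * √y₀ ≤ (2 * √c - t * √y₀) * √y := by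
    rwa [inv_eq_one_div, div_le_div_iff₀ hs (by positivity), one_mul] at hinv
  rw [div_le_iff₀ (by positivity)]
  calc 4 * c * y₀ = (2 * √c * √y₀) ^ 2 := by
        rw [mul_pow, mul_pow, Real.sq_sqrt hc.le, Real.sq_sqrt hy₀.le]; ring
    _ ≤ ((2 * √c - t * √y₀) * √y) ^ 2 := pow_le_pow_left₀ (by positivity) hlin 2
    _ = y * (2 * √c - t * √y₀) ^ 2 := by rw [mul_pow, Real.sq_sqrt hy.le]; ring

theorem stmt_9_general (c₀ : ℝ) (hc₀ : 0 < c₀) (T : EReal)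
    (Y Y' : ℝ → ℝ)
    (hd : ∀ t : ℝ, 0 ≤ t → (t : EReal) < T →
      HasDerivWithinAt Y (Y' t) {s : ℝ | 0 ≤ s ∧ (s : EReal) < T} t)
    (hY0 : 0 < Y 0)
    (hd_pos : ∀ t : ℝ, 0 ≤ t → (t : EReal) < T → 0 < Y' t)
    (hineq : ∀ t : ℝ, 0 ≤ t → (t : EReal) < T → Y t ^ 3 / c₀ ≤ Y' t ^ 2) :
    ∀ t : ℝ, 0 ≤ t → (t : EReal) < T →
      0 < Y t ∧
      (t < 2 * Real.sqrt c₀ / Real.sqrt (Y 0) →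
        4 * c₀ * Y 0 / (2 * Real.sqrt c₀ - t * Real.sqrt (Y 0)) ^ 2 ≤ Y t) := by
  intro t ht0 htT
  have hmem : ∀ s ∈ Icc 0 t, 0 ≤ s ∧ (s : EReal) < T := fun s hs =>
    ⟨hs.1, (EReal.coe_le_coe_iff.2 hs.2).trans_lt htT⟩
  have hderiv : ∀ s ∈ Icc 0 t, HasDerivWithinAt Y (Y' s) (Icc 0 t) s := fun s hs =>
    (hd s (hmem s hs).1 (hmem s hs).2).mono hmem
  have hmem' : ∀ s ∈ Ioo 0 t, 0 ≤ s ∧ (s : EReal) < T := fun s hs =>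
    hmem s (Ioo_subset_Icc_self hs)
  have hY'pos : ∀ s ∈ Ioo 0 t, 0 < Y' s := fun s hs => hd_pos s (hmem' s hs).1 (hmem' s hs).2
  have hmono := monotoneOn_Icc_of_hasDerivWithinAt_nonneg hderiv fun s hs => (hY'pos s hs).le
  have hpos : ∀ s ∈ Icc 0 t, 0 < Y s := fun s hs =>
    hY0.trans_le (hmono (left_mem_Icc.2 ht0) hs hs.1)
  refine ⟨hpos t (right_mem_Icc.2 ht0), fun hlt => ?_⟩
  have hanti := antitoneOn_inv_sqrt_add_div hc₀ hderiv hpos (fun s hs => (hY'pos s hs).le)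
    fun s hs => by
      have := hineq s (hmem' s hs).1 (hmem' s hs).2
      rwa [div_le_iff₀ hc₀, mul_comm] at this
  refine four_mul_div_sq_le_of_inv_sqrt_add_le hc₀ hY0 (hpos t (right_mem_Icc.2 ht0)) hlt ?_
  simpa using hanti (left_mem_Icc.2 ht0) (right_mem_Icc.2 ht0) ht0

/-- If `Y : [0,T) → ℝ` (`T ∈ (0,∞]`) is differentiable with `Y(0) > 0`,
`Y' > 0` and `Y'² ≥ Y³/c₀` on `[0,T)`, then `Y > 0` on `[0,T)` and for every
`t ∈ [0,T)` with `t < 2√c₀/√(Y(0))` one has `Y(t) ≥ 4c₀ Y(0) / (2√c₀ − t√(Y(0)))²`. -/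
theorem stmt_9 (c₀ : ℝ) (hc₀ : 0 < c₀) (T : EReal) (hT : 0 < T)
    (Y Y' : ℝ → ℝ)
    (hd : ∀ t : ℝ, 0 ≤ t → (t : EReal) < T →
      HasDerivWithinAt Y (Y' t) {s : ℝ | 0 ≤ s ∧ (s : EReal) < T} t)
    (hY0 : 0 < Y 0)
    (hd_pos : ∀ t : ℝ, 0 ≤ t → (t : EReal) < T → 0 < Y' t)
    (hineq : ∀ t : ℝ, 0 ≤ t → (t : EReal) < T → Y t ^ 3 / c₀ ≤ Y' t ^ 2) :
    ∀ t : ℝ, 0 ≤ t → (t : EReal) < T →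
      0 < Y t ∧
      (t < 2 * Real.sqrt c₀ / Real.sqrt (Y 0) →
        4 * c₀ * Y 0 / (2 * Real.sqrt c₀ - t * Real.sqrt (Y 0)) ^ 2 ≤ Y t) :=
  stmt_9_general c₀ hc₀ T Y Y' hd hY0 hd_pos hineq
end

section
/- Let c₀ > 0. There is no twice differentiable function Y : [0,∞) → ℝ satisfying simultaneously: Y(0) > 0, Y'(0) > 0, Y'(0)² ≥ Y(0)³/c₀, and Y''(t) ≥ (3/(2c₀)) Y(t)² for all t ≥ 0. Equivalently, any twice differentiable Y defined on an interval [0,T) satisfying these conditions must have T ≤ 2√c₀/√(Y(0)). -/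
/-!
Since `Y'' ≥ 0`, both `Y'` and `Y` increase and stay positive. The energy `Y'² - Y³/c₀` is
nondecreasing (its derivative is `2Y'(Y'' - 3Y²/(2c₀)) ≥ 0`), so `Y' ≥ Y^{3/2}/√c₀` for all time.
Hence `(Y^{-1/2})' = -Y'/(2Y^{3/2}) ≤ -1/(2√c₀)`, and the positive quantity `Y^{-1/2}` would
reach `0` by time `2√c₀/√(Y 0)`.
-/

open Set Real

noncomputable def blowupTime (c y₀ : ℝ) : ℝ := 2 * √c / √y₀

section DerivOnIci

variable {a : ℝ} {f f' : ℝ → ℝ}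

theorem monotoneOn_Ici_of_hasDerivWithinAt_nonneg
    (hf : ∀ t, a ≤ t → HasDerivWithinAt f (f' t) (Ici a) t) (hf' : ∀ t, a < t → 0 ≤ f' t) :
    MonotoneOn f (Ici a) :=
  monotoneOn_of_hasDerivWithinAt_nonneg (convex_Ici a)
    (fun t ht => (hf t ht).continuousWithinAt)
    (fun t ht => by
      rw [interior_Ici] at ht
      exact ((hf t ht.le).hasDerivAt (Ici_mem_nhds ht)).hasDerivWithinAt)
    (fun t ht => hf' t (by rwa [interior_Ici] at ht))

theorem antitoneOn_Ici_of_hasDerivWithinAt_nonpos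
    (hf : ∀ t, a ≤ t → HasDerivWithinAt f (f' t) (Ici a) t) (hf' : ∀ t, a < t → f' t ≤ 0) :
    AntitoneOn f (Ici a) := by
  have := monotoneOn_Ici_of_hasDerivWithinAt_nonneg (f := -f) (f' := -f')
    (fun t ht => (hf t ht).neg) (fun t ht => neg_nonneg.mpr (hf' t ht))
  exact fun s hs t ht hst => neg_le_neg_iff.mp (this hs ht hst)

end DerivOnIci

section BlowUp

variable {a c : ℝ} {Y Y' Y'' : ℝ → ℝ}

theorem monotoneOn_energy_s10 (hY : ∀ t, a ≤ t → HasDerivWithinAt Y (Y' t) (Ici a) t)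
    (hY' : ∀ t, a ≤ t → HasDerivWithinAt Y' (Y'' t) (Ici a) t)
    (hY'_nonneg : ∀ t, a ≤ t → 0 ≤ Y' t) (hY'' : ∀ t, a ≤ t → 3 / (2 * c) * Y t ^ 2 ≤ Y'' t) :
    MonotoneOn (fun t => Y' t ^ 2 - Y t ^ 3 / c) (Ici a) := by
  refine monotoneOn_Ici_of_hasDerivWithinAt_nonneg
    (f' := fun t => 2 * Y' t * (Y'' t - 3 / (2 * c) * Y t ^ 2))
    (fun t ht => (((hY' t ht).pow 2).sub (((hY t ht).pow 3).div_const c)).congr_deriv ?_)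
    (fun t ht => mul_nonneg (mul_nonneg zero_le_two (hY'_nonneg t ht.le))
      (sub_nonneg.mpr (hY'' t ht.le)))
  push_cast
  ring

theorem sub_lt_blowupTime_of_pow_three_le (hc : 0 < c)
    (hY : ∀ t, a ≤ t → HasDerivWithinAt Y (Y' t) (Ici a) t) (hY_pos : ∀ t, a ≤ t → 0 < Y t)
    (hY'_nonneg : ∀ t, a ≤ t → 0 ≤ Y' t) (hE : ∀ t, a ≤ t → Y t ^ 3 ≤ c * Y' t ^ 2)
    (t : ℝ) (ht : a ≤ t) : t - a < blowupTime c (Y a) := by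
  have hsc : 0 < √c := sqrt_pos.mpr hc
  have hF : AntitoneOn (fun t => (√(Y t))⁻¹ + (t - a) / (2 * √c)) (Ici a) := by
    refine antitoneOn_Ici_of_hasDerivWithinAt_nonpos
      (f' := fun t => -(1 / (2 * √(Y t)) * Y' t) / √(Y t) ^ 2 + 1 / (2 * √c))
      (fun t ht => ?_) (fun t ht => ?_)
    · have hsqrt := (hasDerivAt_sqrt (hY_pos t ht).ne').comp_hasDerivWithinAt t (hY t ht)
      exact (hsqrt.inv (sqrt_pos.mpr (hY_pos t ht)).ne').add
        (((hasDerivWithinAt_id t _).sub_const a).div_const _)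
    · have hu : 0 < √(Y t) := sqrt_pos.mpr (hY_pos t ht.le)
      have hu2 : √(Y t) ^ 2 = Y t := sq_sqrt (hY_pos t ht.le).le
      have hkey : √(Y t) ^ 3 ≤ √c * Y' t := by
        rw [← pow_le_pow_iff_left₀ (by positivity)
          (mul_nonneg hsc.le (hY'_nonneg t ht.le)) two_ne_zero, mul_pow, sq_sqrt hc.le,
          ← pow_mul, pow_mul', hu2]
        exact hE t ht.le
      have e : -(1 / (2 * √(Y t)) * Y' t) / √(Y t) ^ 2 + 1 / (2 * √c)
          = 1 / (2 * √c) - Y' t / (2 * √(Y t) ^ 3) := by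
        field_simp
        ring
      rw [e, sub_nonpos, div_le_div_iff₀ (by positivity) (by positivity)]
      linarith
  have hFt := hF self_mem_Ici ht ht
  have hYt : 0 < (√(Y t))⁻¹ := inv_pos.mpr (sqrt_pos.mpr (hY_pos t ht))
  simp only [sub_self, zero_div, add_zero] at hFt
  have hlt : (t - a) / (2 * √c) < (√(Y a))⁻¹ := by linarith
  rwa [div_lt_iff₀ (by positivity), inv_mul_eq_div] at hlt

theorem sub_lt_blowupTime (hc : 0 < c)
    (hY : ∀ t, a ≤ t → HasDerivWithinAt Y (Y' t) (Ici a) t)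
    (hY' : ∀ t, a ≤ t → HasDerivWithinAt Y' (Y'' t) (Ici a) t)
    (hYa : 0 < Y a) (hY'a : 0 ≤ Y' a) (hEa : Y a ^ 3 / c ≤ Y' a ^ 2)
    (hY'' : ∀ t, a ≤ t → 3 / (2 * c) * Y t ^ 2 ≤ Y'' t) (t : ℝ) (ht : a ≤ t) :
    t - a < blowupTime c (Y a) := by
  have hY''_nonneg (t : ℝ) (ht : a < t) : 0 ≤ Y'' t :=
    le_trans (by positivity) (hY'' t ht.le)
  have hY'_nonneg (t : ℝ) (ht : a ≤ t) : 0 ≤ Y' t :=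
    hY'a.trans <| monotoneOn_Ici_of_hasDerivWithinAt_nonneg hY' hY''_nonneg self_mem_Ici ht ht
  have hY_pos (t : ℝ) (ht : a ≤ t) : 0 < Y t :=
    hYa.trans_le <| monotoneOn_Ici_of_hasDerivWithinAt_nonneg hY
      (fun s hs => hY'_nonneg s hs.le) self_mem_Ici ht ht
  have hE (t : ℝ) (ht : a ≤ t) : Y t ^ 3 ≤ c * Y' t ^ 2 := by
    have := monotoneOn_energy_s10 hY hY' hY'_nonneg hY'' self_mem_Ici ht ht
    rw [← div_le_iff₀' hc]
    linarith
  exact sub_lt_blowupTime_of_pow_three_le hc hY hY_pos hY'_nonneg hE t ht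

end BlowUp

/-- For `c₀ > 0`, there is no twice differentiable `Y : [0,∞) → ℝ` with
`Y(0) > 0`, `Y'(0) > 0`, `Y'(0)² ≥ Y(0)³/c₀` and `Y''(t) ≥ (3/(2c₀)) Y(t)²` for all
`t ≥ 0`. -/
theorem stmt_10 (c₀ : ℝ) (hc₀ : 0 < c₀) :
    ¬ ∃ Y Y' Y'' : ℝ → ℝ,
      (∀ t : ℝ, 0 ≤ t → HasDerivWithinAt Y (Y' t) (Set.Ici (0 : ℝ)) t) ∧
      (∀ t : ℝ, 0 ≤ t → HasDerivWithinAt Y' (Y'' t) (Set.Ici (0 : ℝ)) t) ∧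
      0 < Y 0 ∧ 0 < Y' 0 ∧ Y 0 ^ 3 / c₀ ≤ Y' 0 ^ 2 ∧
      (∀ t : ℝ, 0 ≤ t → 3 / (2 * c₀) * Y t ^ 2 ≤ Y'' t) := by
  rintro ⟨Y, Y', Y'', hY, hY', hY0, hY'0, hE0, hY''⟩
  have := sub_lt_blowupTime hc₀ hY hY' hY0 hY'0.le hE0 hY'' (blowupTime c₀ (Y 0))
    (by unfold blowupTime; positivity)
  rw [sub_zero] at this
  exact lt_irrefl _ this
end

section
/- Let M > 0 and C > 0. Suppose U, V : [0,∞) → ℝ are differentiable, U(t) ≥ 0 and V(t) ≥ 0 for all t ≥ 0, and they satisfy the differential inequalities U'(t) ≤ (−4M + 4C² V(t)) U(t) and V'(t) ≤ C U(t) for all t ≥ 0, together with the initial bounds U(0) ≤ M²/(4C³) and V(0) ≤ M/(8C²). Then for every t ≥ 0: U(t) ≤ U(0) e^{−2Mt} and V(t) ≤ V(0) + (C/(2M)) U(0) ≤ M/(4C²). -/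
/-!
With `c = C / (2M)`, the quantity `W = V + c U` has `W' ≤ C (2C²V/M - 1) U`, which is
nonpositive as long as `V < M / (2C²)`. Since `V ≤ W` and `W(0) ≤ M / (4C²)`, a bootstrap
argument shows that `W` never exceeds `W(0)`; hence `V ≤ M / (4C²)` for all time, so
`U' ≤ -2M U` and `U` decays like `e^{-2Mt}`.
-/

open Set Real

section RightDerivatives

variable {f f' : ℝ → ℝ}

lemma continuousOn_Icc_of_hasDerivWithinAt_Ici
    (hf : ∀ t, 0 ≤ t → HasDerivWithinAt f (f' t) (Ici 0) t) (b : ℝ) :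
    ContinuousOn f (Icc 0 b) := fun x hx =>
  (hf x hx.1).continuousWithinAt.mono Icc_subset_Ici_self

lemma hasDerivWithinAt_Ici_self_of_Ici_zero
    (hf : ∀ t, 0 ≤ t → HasDerivWithinAt f (f' t) (Ici 0) t) {x : ℝ} (hx : 0 ≤ x) :
    HasDerivWithinAt f (f' x) (Ici x) x :=
  (hf x hx).mono (Ici_subset_Ici.2 hx)

lemma le_apply_zero_of_hasDerivWithinAt_nonpos
    (hf : ∀ t, 0 ≤ t → HasDerivWithinAt f (f' t) (Ici 0) t)
    (hf' : ∀ t, 0 ≤ t → f' t ≤ 0) {t : ℝ} (ht : 0 ≤ t) : f t ≤ f 0 :=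
  image_le_of_deriv_right_le_deriv_boundary (continuousOn_Icc_of_hasDerivWithinAt_Ici hf t)
    (fun _ hx => hasDerivWithinAt_Ici_self_of_Ici_zero hf hx.1) (B := fun _ => f 0) le_rfl
    continuousOn_const (fun _ _ => hasDerivWithinAt_const _ _ (f 0)) (fun x hx => hf' x hx.1)
    ⟨ht, le_rfl⟩

lemma le_apply_zero_mul_exp_of_hasDerivWithinAt_le_mul {k : ℝ}
    (hf : ∀ t, 0 ≤ t → HasDerivWithinAt f (f' t) (Ici 0) t)
    (hf' : ∀ t, 0 ≤ t → f' t ≤ k * f t) {t : ℝ} (ht : 0 ≤ t) : f t ≤ f 0 * exp (k * t) := by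
  have hg : ∀ s, 0 ≤ s → HasDerivWithinAt (fun s => f s * exp (-k * s))
      ((f' s - k * f s) * exp (-k * s)) (Ici 0) s := fun s hs => by
    have hexp : HasDerivAt (fun s => exp (-k * s)) (exp (-k * s) * -k) s := by
      simpa using ((hasDerivAt_id s).const_mul (-k)).exp
    exact ((hf s hs).mul hexp.hasDerivWithinAt).congr_deriv (by ring)
  have hg' : ∀ s, 0 ≤ s → (f' s - k * f s) * exp (-k * s) ≤ 0 := fun s hs =>
    mul_nonpos_of_nonpos_of_nonneg (by linarith [hf' s hs]) (exp_pos _).le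
  have hdecay := le_apply_zero_of_hasDerivWithinAt_nonpos hg hg' ht
  simp only [mul_zero, exp_zero, mul_one] at hdecay
  rwa [neg_mul, exp_neg, ← div_eq_mul_inv, div_le_iff₀ (exp_pos _)] at hdecay

/-- Compare `f` with the barrier `f 0 + η x`, where `η (t + 1) < K - f 0` keeps the barrier, and
hence `f`, below `K` on `[0, t]`; then let `η → 0`. -/
lemma le_apply_zero_of_hasDerivWithinAt_nonpos_of_lt {K : ℝ}
    (hf : ∀ t, 0 ≤ t → HasDerivWithinAt f (f' t) (Ici 0) t)
    (hf' : ∀ t, 0 ≤ t → f t < K → f' t ≤ 0) (h0 : f 0 < K) {t : ℝ} (ht : 0 ≤ t) :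
    f t ≤ f 0 := by
  refine le_of_forall_pos_lt_add fun ε hε => ?_
  set η := min ε (K - f 0) / (2 * (t + 1))
  have hη : 0 < η := by positivity
  have hηt : η * t < min ε (K - f 0) / 2 := by
    have : η * (t + 1) = min ε (K - f 0) / 2 := by
      simp only [η]; field_simp
    nlinarith
  have hbarrier := image_le_of_deriv_right_lt_deriv_boundary
    (continuousOn_Icc_of_hasDerivWithinAt_Ici hf t)
    (fun x hx => hasDerivWithinAt_Ici_self_of_Ici_zero hf hx.1) (B := fun x => f 0 + η * x)
    (by simp) (fun x => by simpa using ((hasDerivAt_id x).const_mul η).const_add (f 0))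
    (fun x hx hfx => by
      have hηx : η * x ≤ η * t := mul_le_mul_of_nonneg_left hx.2.le hη.le
      have : f x < K := by linarith [min_le_right ε (K - f 0), hfx]
      linarith [hf' x hx.1 this])
    ⟨ht, le_rfl⟩
  linarith [min_le_left ε (K - f 0), hbarrier]

end RightDerivatives

section Arithmetic

variable {M C : ℝ}

lemma add_div_mul_nonpos_of_lt (hM : 0 < M) (hC : 0 < C) {u v u' v' : ℝ} (hu : 0 ≤ u)
    (hv : v < M / (2 * C ^ 2)) (hu' : u' ≤ (-4 * M + 4 * C ^ 2 * v) * u) (hv' : v' ≤ C * u) :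
    v' + C / (2 * M) * u' ≤ 0 := by
  have hvM : 2 * C ^ 2 * v < M := by rwa [lt_div_iff₀ (by positivity), mul_comm] at hv
  have hu'c : C / (2 * M) * u' ≤ C / (2 * M) * ((-4 * M + 4 * C ^ 2 * v) * u) := by gcongr
  have hfactor : C * u + C / (2 * M) * ((-4 * M + 4 * C ^ 2 * v) * u)
      = C / M * ((2 * C ^ 2 * v - M) * u) := by
    field_simp; ring
  have hneg : C / M * ((2 * C ^ 2 * v - M) * u) ≤ 0 :=
    mul_nonpos_of_nonneg_of_nonpos (by positivity)
      (mul_nonpos_of_nonpos_of_nonneg (by linarith) hu)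
  linarith

lemma add_div_mul_le_of_le_of_le (hM : 0 < M) (hC : 0 < C) {u v : ℝ} (hu : u ≤ M ^ 2 / (4 * C ^ 3))
    (hv : v ≤ M / (8 * C ^ 2)) : v + C / (2 * M) * u ≤ M / (4 * C ^ 2) := by
  have hcu : C / (2 * M) * u ≤ M / (8 * C ^ 2) := by
    calc C / (2 * M) * u ≤ C / (2 * M) * (M ^ 2 / (4 * C ^ 3)) := by gcongr
      _ = M / (8 * C ^ 2) := by field_simp; ring
  calc v + C / (2 * M) * u ≤ M / (8 * C ^ 2) + M / (8 * C ^ 2) := add_le_add hv hcu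
    _ = M / (4 * C ^ 2) := by field_simp; ring

end Arithmetic

theorem stmt_12_general (M C : ℝ) (hM : 0 < M) (hC : 0 < C)
    (U V U' V' : ℝ → ℝ)
    (hU : ∀ t : ℝ, 0 ≤ t → HasDerivWithinAt U (U' t) (Set.Ici (0 : ℝ)) t)
    (hV : ∀ t : ℝ, 0 ≤ t → HasDerivWithinAt V (V' t) (Set.Ici (0 : ℝ)) t)
    (hUpos : ∀ t : ℝ, 0 ≤ t → 0 ≤ U t)
    (hU' : ∀ t : ℝ, 0 ≤ t → U' t ≤ (-4 * M + 4 * C ^ 2 * V t) * U t)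
    (hV' : ∀ t : ℝ, 0 ≤ t → V' t ≤ C * U t)
    (hU0 : U 0 ≤ M ^ 2 / (4 * C ^ 3))
    (hV0 : V 0 ≤ M / (8 * C ^ 2)) :
    ∀ t : ℝ, 0 ≤ t →
      U t ≤ U 0 * Real.exp (-2 * M * t) ∧
      V t ≤ V 0 + C / (2 * M) * U 0 ∧
      V 0 + C / (2 * M) * U 0 ≤ M / (4 * C ^ 2) := by
  set c := C / (2 * M)
  have hW : ∀ t, 0 ≤ t → HasDerivWithinAt (fun t => V t + c * U t) (V' t + c * U' t) (Ici 0) t :=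
    fun t ht => (hV t ht).add ((hU t ht).const_mul c)
  have hV_le_W : ∀ t, 0 ≤ t → V t ≤ V t + c * U t := fun t ht =>
    le_add_of_nonneg_right (mul_nonneg (by positivity) (hUpos t ht))
  have hW0 : V 0 + c * U 0 ≤ M / (4 * C ^ 2) := add_div_mul_le_of_le_of_le hM hC hU0 hV0
  have hthreshold : M / (4 * C ^ 2) < M / (2 * C ^ 2) := by gcongr; norm_num
  have hW_le : ∀ t, 0 ≤ t → V t + c * U t ≤ V 0 + c * U 0 := fun t ht =>
    le_apply_zero_of_hasDerivWithinAt_nonpos_of_lt hW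
      (fun s hs hWs => add_div_mul_nonpos_of_lt hM hC (hUpos s hs)
        ((hV_le_W s hs).trans_lt hWs) (hU' s hs) (hV' s hs))
      (hW0.trans_lt hthreshold) ht
  have hV_le : ∀ t, 0 ≤ t → V t ≤ M / (4 * C ^ 2) := fun t ht =>
    ((hV_le_W t ht).trans (hW_le t ht)).trans hW0
  have hU'_le : ∀ t, 0 ≤ t → U' t ≤ -2 * M * U t := fun t ht => by
    have hV4 : 4 * C ^ 2 * V t ≤ M := by
      have := hV_le t ht
      rwa [le_div_iff₀ (by positivity), mul_comm] at this
    nlinarith [hU' t ht, hUpos t ht]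
  intro t ht
  exact ⟨le_apply_zero_mul_exp_of_hasDerivWithinAt_le_mul hU hU'_le ht,
    (hV_le_W t ht).trans (hW_le t ht), hW0⟩

/-- Let `M, C > 0` and let `U, V : [0,∞) → ℝ` be nonnegative and
differentiable with `U' ≤ (−4M + 4C²V)U`, `V' ≤ C U`, `U(0) ≤ M²/(4C³)` and
`V(0) ≤ M/(8C²)`. Then for all `t ≥ 0`: `U(t) ≤ U(0) e^{−2Mt}` and
`V(t) ≤ V(0) + (C/(2M)) U(0) ≤ M/(4C²)`. -/
theorem stmt_12 (M C : ℝ) (hM : 0 < M) (hC : 0 < C)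
    (U V U' V' : ℝ → ℝ)
    (hU : ∀ t : ℝ, 0 ≤ t → HasDerivWithinAt U (U' t) (Set.Ici (0 : ℝ)) t)
    (hV : ∀ t : ℝ, 0 ≤ t → HasDerivWithinAt V (V' t) (Set.Ici (0 : ℝ)) t)
    (hUpos : ∀ t : ℝ, 0 ≤ t → 0 ≤ U t)
    (hVpos : ∀ t : ℝ, 0 ≤ t → 0 ≤ V t)
    (hU' : ∀ t : ℝ, 0 ≤ t → U' t ≤ (-4 * M + 4 * C ^ 2 * V t) * U t)
    (hV' : ∀ t : ℝ, 0 ≤ t → V' t ≤ C * U t)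
    (hU0 : U 0 ≤ M ^ 2 / (4 * C ^ 3))
    (hV0 : V 0 ≤ M / (8 * C ^ 2)) :
    ∀ t : ℝ, 0 ≤ t →
      U t ≤ U 0 * Real.exp (-2 * M * t) ∧
      V t ≤ V 0 + C / (2 * M) * U 0 ∧
      V 0 + C / (2 * M) * U 0 ≤ M / (4 * C ^ 2) :=
  stmt_12_general M C hM hC U V U' V' hU hV hUpos hU' hV' hU0 hV0
end

section
/- There exists a constant c > 0 such that for every r ≥ 1, the function K(r) = ∫₀^∞ e^{−r cosh θ} cosh θ dθ satisfies 0 < K(r) ≤ c · r^{−1/2} e^{−r}. -/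
/-! Bounding `cosh θ` below by `1 + θ²/4` in the exponent and above by `e^θ` in the factor, the
integrand is at most `e^{1/r - r} e^{-(r/4)(θ - 2/r)²}`, a Gaussian of total mass `√(4π/r)`;
for `r ≥ 1` the prefactor `e^{1/r}` is at most `e`. -/

open MeasureTheory Real Set

lemma one_add_sq_div_four_le_cosh (x : ℝ) : 1 + x ^ 2 / 4 ≤ cosh x := by
  rw [← cosh_abs, ← sq_abs, cosh_eq]
  have := quadratic_le_exp_of_nonneg (abs_nonneg x)
  nlinarith [add_one_le_exp (-|x|)]

lemma cosh_le_exp_abs (x : ℝ) : cosh x ≤ exp |x| := by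
  rw [← cosh_abs, cosh_eq]
  linarith [exp_le_exp.2 (neg_le_self (abs_nonneg x))]

lemma integrable_exp_neg_mul_sub_sq {b : ℝ} (hb : 0 < b) (a : ℝ) :
    Integrable fun x : ℝ ↦ exp (-b * (x - a) ^ 2) :=
  (integrable_exp_neg_mul_sq hb).comp_sub_right a

lemma integral_exp_neg_mul_sub_sq (b a : ℝ) : ∫ x : ℝ, exp (-b * (x - a) ^ 2) = √(π / b) := by
  rw [integral_sub_right_eq_self (fun x ↦ exp (-b * x ^ 2)) a, integral_gaussian]

lemma exp_neg_mul_cosh_mul_cosh_le {r θ : ℝ} (hr : 0 < r) (hθ : 0 ≤ θ) :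
    exp (-r * cosh θ) * cosh θ ≤ exp (r⁻¹ - r) * exp (-(r / 4) * (θ - 2 / r) ^ 2) := by
  have h_exp : exp (-r * cosh θ) ≤ exp (-r * (1 + θ ^ 2 / 4)) :=
    exp_le_exp.2 (by nlinarith [one_add_sq_div_four_le_cosh θ])
  have h_cosh : cosh θ ≤ exp θ := by simpa [abs_of_nonneg hθ] using cosh_le_exp_abs θ
  have h_square : -r * (1 + θ ^ 2 / 4) + θ = r⁻¹ - r + -(r / 4) * (θ - 2 / r) ^ 2 := by
    field_simp
    ring
  calc exp (-r * cosh θ) * cosh θ ≤ exp (-r * (1 + θ ^ 2 / 4)) * exp θ :=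
        mul_le_mul h_exp h_cosh (cosh_pos θ).le (exp_pos _).le
    _ = exp (r⁻¹ - r) * exp (-(r / 4) * (θ - 2 / r) ^ 2) := by
        rw [← exp_add, h_square, exp_add]

section

variable {r : ℝ}

lemma integrableOn_exp_neg_mul_cosh_mul_cosh (hr : 0 < r) :
    IntegrableOn (fun θ ↦ exp (-r * cosh θ) * cosh θ) (Ioi 0) := by
  have h_gauss : Integrable fun θ : ℝ ↦ exp (r⁻¹ - r) * exp (-(r / 4) * (θ - 2 / r) ^ 2) :=
    (integrable_exp_neg_mul_sub_sq (by positivity) _).const_mul _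
  refine h_gauss.integrableOn.mono' (by fun_prop) ?_
  filter_upwards [ae_restrict_mem measurableSet_Ioi] with θ hθ
  rw [norm_of_nonneg (by positivity)]
  exact exp_neg_mul_cosh_mul_cosh_le hr (le_of_lt hθ)

lemma setIntegral_exp_neg_mul_cosh_mul_cosh_pos (hr : 0 < r) :
    0 < ∫ θ in Ioi (0 : ℝ), exp (-r * cosh θ) * cosh θ := by
  rw [integral_pos_iff_support_of_nonneg (fun θ ↦ by positivity)
    (integrableOn_exp_neg_mul_cosh_mul_cosh hr)]
  have h_support : Function.support (fun θ ↦ exp (-r * cosh θ) * cosh θ) = univ :=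
    Function.support_eq_univ fun θ ↦ by positivity
  rw [h_support]
  simp

lemma setIntegral_exp_neg_mul_cosh_mul_cosh_le (hr : 0 < r) :
    ∫ θ in Ioi (0 : ℝ), exp (-r * cosh θ) * cosh θ ≤ exp (r⁻¹ - r) * √(4 * π / r) := by
  have h_gauss : Integrable fun θ : ℝ ↦ exp (r⁻¹ - r) * exp (-(r / 4) * (θ - 2 / r) ^ 2) :=
    (integrable_exp_neg_mul_sub_sq (by positivity) _).const_mul _
  calc ∫ θ in Ioi (0 : ℝ), exp (-r * cosh θ) * cosh θ
      ≤ ∫ θ in Ioi (0 : ℝ), exp (r⁻¹ - r) * exp (-(r / 4) * (θ - 2 / r) ^ 2) :=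
        setIntegral_mono_on (integrableOn_exp_neg_mul_cosh_mul_cosh hr) h_gauss.integrableOn
          measurableSet_Ioi fun θ hθ ↦ exp_neg_mul_cosh_mul_cosh_le hr (le_of_lt hθ)
    _ ≤ ∫ θ, exp (r⁻¹ - r) * exp (-(r / 4) * (θ - 2 / r) ^ 2) :=
        setIntegral_le_integral h_gauss (Filter.Eventually.of_forall fun θ ↦ by positivity)
    _ = exp (r⁻¹ - r) * √(4 * π / r) := by
        rw [integral_const_mul, integral_exp_neg_mul_sub_sq, div_div_eq_mul_div, mul_comm π]

end

/-- There is a constant `c > 0` such that for every `r ≥ 1`,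
`0 < K(r) ≤ c r^{−1/2} e^{−r}`, where `K(r) = ∫₀^∞ e^{−r cosh θ} cosh θ dθ`. -/
theorem stmt_16 :
    ∃ c : ℝ, 0 < c ∧ ∀ r : ℝ, 1 ≤ r →
      0 < (∫ θ in Set.Ioi (0 : ℝ), Real.exp (-r * Real.cosh θ) * Real.cosh θ) ∧
      (∫ θ in Set.Ioi (0 : ℝ), Real.exp (-r * Real.cosh θ) * Real.cosh θ)
        ≤ c * r ^ (-(1 / 2 : ℝ)) * Real.exp (-r) := by
  refine ⟨exp 1 * √(4 * π), by positivity, fun r hr ↦ ?_⟩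
  have hr₀ : 0 < r := by linarith
  refine ⟨setIntegral_exp_neg_mul_cosh_mul_cosh_pos hr₀,
    (setIntegral_exp_neg_mul_cosh_mul_cosh_le hr₀).trans ?_⟩
  have h_exp : exp (r⁻¹ - r) ≤ exp 1 * exp (-r) := by
    rw [← exp_add]
    exact exp_le_exp.2 (by linarith [inv_le_one_of_one_le₀ hr])
  have h_sqrt : √(4 * π / r) = √(4 * π) * r ^ (-(1 / 2 : ℝ)) := by
    rw [sqrt_div' _ hr₀.le, rpow_neg hr₀.le, ← sqrt_eq_rpow, div_eq_mul_inv]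
  rw [h_sqrt]
  calc exp (r⁻¹ - r) * (√(4 * π) * r ^ (-(1 / 2 : ℝ)))
      ≤ exp 1 * exp (-r) * (√(4 * π) * r ^ (-(1 / 2 : ℝ))) := by gcongr
    _ = exp 1 * √(4 * π) * r ^ (-(1 / 2 : ℝ)) * exp (-r) := by ring
end
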